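/- Let a, b and n > 3 be positive integers, set a_m = r_b(n) + a·r_b(m-1) for 1 ≤ m ≤ n, and fix i with 1 ≤ i ≤ n. For l ∈ {1,…,n-1}, the monomial x_1^{a+1}·x_l^b is strictly larger than x_{l+1}·x_n^b with respect to the order ≺_i if and only if l ≤ i-1. -/
import Mathlib


/-- The ℓ-th repunit in base `b`: `r_b(ℓ) = ∑_{j=0}^{ℓ-1} b^j`, with `r_b(0) = 0`. -/
def rep (b ℓ : ℕ) : ℕ := ∑ j ∈ Finset.range ℓ, b ^ j

/-- `a_m = r_b(n) + a · r_b(m-1)`. -/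
def aseq (a b n m : ℕ) : ℕ := rep b n + a * rep b (m - 1)

/-- Rank of the (0-indexed) variable `m` (i.e. `x_{m+1}` in 1-indexed notation) for the
variable ordering `x_i ≺ x_{i-1} ≺ ⋯ ≺ x_1 ≺ x_n ≺ ⋯ ≺ x_{i+1}` (here `i` is 1-indexed);
smaller rank means smaller variable. -/
def rankv (n i : ℕ) (m : Fin n) : ℕ :=
  if (m : ℕ) + 1 ≤ i then i - ((m : ℕ) + 1) else i + (n - ((m : ℕ) + 1))

/-- The `A`-weighted degree of an exponent vector. -/
def wdeg (a b n : ℕ) (u : Fin n → ℕ) : ℕ := ∑ m : Fin n, u m * aseq a b n ((m : ℕ) + 1)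

/-- The `A`-graded reverse lexicographic order `≺_i` (with `x_i` smallest) on exponent
vectors: `u ≺_i v` iff the weighted degree of `u` is smaller, or the weighted degrees agree
and the smallest variable in which `u` and `v` differ has strictly larger exponent in `u`. -/
def prec (a b n i : ℕ) (u v : Fin n → ℕ) : Prop :=
  wdeg a b n u < wdeg a b n v ∨
    (wdeg a b n u = wdeg a b n v ∧
      ∃ m : Fin n, v m < u m ∧ ∀ m' : Fin n, rankv n i m' < rankv n i m → u m' = v m')

/-- The exponent vector of the monomial `x_m^e` (with `m` 1-indexed). -/
def sgl (n m e : ℕ) : Fin n → ℕ := fun m' => if (m' : ℕ) + 1 = m then e else 0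

lemma rep_succ (b k : ℕ) : rep b (k + 1) = b * rep b k + 1 := by
  rw [rep, Finset.sum_range_succ']
  simp [pow_succ, ← Finset.sum_mul, rep, mul_comm, Finset.mul_sum]

lemma wdeg_add (a b n : ℕ) (u v : Fin n → ℕ) :
    wdeg a b n (u + v) = wdeg a b n u + wdeg a b n v := by
  simp [wdeg, add_mul, Finset.sum_add_distrib]

lemma wdeg_sgl (a b n m e : ℕ) (h1 : 1 ≤ m) (h2 : m ≤ n) :
    wdeg a b n (sgl n m e) = e * aseq a b n m := by
  have hm : m - 1 < n := by omega
  rw [wdeg, Finset.sum_eq_single (⟨m - 1, hm⟩ : Fin n)]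
  · simp only [sgl, Fin.val_mk]
    rw [if_pos (by omega), Nat.sub_add_cancel h1]
  · intro m' _ hne
    have h : (m' : ℕ) + 1 ≠ m := by
      intro h; exact hne (Fin.ext (by simp; omega))
    simp [sgl, h]
  · intro h; exact absurd (Finset.mem_univ _) h

theorem stmt4 (a b n : ℕ) (ha : 0 < a) (hb : 0 < b) (hn : 3 < n)
    (i : ℕ) (hi1 : 1 ≤ i) (hi2 : i ≤ n)
    (l : ℕ) (hl1 : 1 ≤ l) (hl2 : l ≤ n - 1) :
    prec a b n i (sgl n (l + 1) 1 + sgl n n b) (sgl n 1 (a + 1) + sgl n l b) ↔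
      l ≤ i - 1 := by
  have hweq : wdeg a b n (sgl n (l + 1) 1 + sgl n n b)
      = wdeg a b n (sgl n 1 (a + 1) + sgl n l b) := by
    rw [wdeg_add, wdeg_add, wdeg_sgl a b n (l + 1) 1 (by omega) (by omega),
      wdeg_sgl a b n n b (by omega) le_rfl, wdeg_sgl a b n 1 (a + 1) le_rfl (by omega),
      wdeg_sgl a b n l b hl1 (by omega)]
    obtain ⟨l', rfl⟩ : ∃ l', l = l' + 1 := ⟨l - 1, by omega⟩
    obtain ⟨n', rfl⟩ : ∃ n', n = n' + 1 := ⟨n - 1, by omega⟩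
    simp only [aseq, Nat.add_sub_cancel, Nat.sub_self]
    rw [rep_succ b n', rep_succ b l']
    simp only [rep, Finset.range_zero, Finset.sum_empty]
    ring
  rw [prec]
  constructor
  · rintro (hlt | ⟨-, m, hm, hall⟩)
    · omega
    · by_contra hli
      have hil : i ≤ l := by omega
      have hmval : (m : ℕ) = l ∨ (m : ℕ) = n - 1 := by
        simp only [Pi.add_apply, sgl] at hm
        split_ifs at hm <;> omega
      have hrm : i ≤ rankv n i m := by
        unfold rankv; split_ifs <;> omega
      rcases Nat.lt_or_ge i l with hlt' | hge
      · have h0 := hall ⟨0, by omega⟩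
          (by simp only [rankv, Fin.val_mk]; split_ifs <;> omega)
        simp only [Pi.add_apply, sgl, Fin.val_mk] at h0
        split_ifs at h0 <;> omega
      · have h0 := hall ⟨l - 1, by omega⟩
          (by simp only [rankv, Fin.val_mk]; split_ifs <;> omega)
        simp only [Pi.add_apply, sgl, Fin.val_mk] at h0
        split_ifs at h0 <;> omega
  · intro hli
    right
    refine ⟨hweq, ?_⟩
    by_cases hin : i = n
    · refine ⟨⟨n - 1, by omega⟩, ?_, ?_⟩
      · simp only [Pi.add_apply, sgl, Fin.val_mk]
        split_ifs <;> omega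
      · intro m' hm'
        exfalso
        simp only [rankv, Fin.val_mk] at hm'
        split_ifs at hm' <;> omega
    · refine ⟨⟨l, by omega⟩, ?_, ?_⟩
      · simp only [Pi.add_apply, sgl, Fin.val_mk]
        split_ifs <;> omega
      · intro m' hm'
        simp only [rankv, Fin.val_mk] at hm'
        simp only [Pi.add_apply, sgl, Fin.val_mk]
        split_ifs at hm' ⊢ <;> omega
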